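/- With notation as above (basis of g with integral structure constants, r > 1), the norm ||·||_r on U(g) is multiplicative: ||uv||_r = ||u||_r ||v||_r for all u, v ∈ U(g). In particular U(g) equipped with ||·||_r has no zero divisors. -/

import Mathlib

/-!
Write `Λₙ` for the span over the unit ball of `L` of the PBW monomials `X^γ` with `|γ| < n`.
Straightening `x_i x_j = x_j x_i + [x_i, x_j]` with integral structure constants gives, by
induction on degrees, `X^α X^β ∈ X^{α+β} + Λ_{|α|+|β|}`; the ultrametric inequality then yields
`‖uv‖_r ≤ ‖u‖_r ‖v‖_r`. For the reverse inequality let `α₀` (resp. `β₀`) be the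
lexicographically largest index at which `‖u_α‖ r^{|α|}` attains `‖u‖_r` (resp. for `v`). In
the coefficient of `uv` at `α₀ + β₀`, the term `u_{α₀} v_{β₀}` strictly dominates every other
contribution: those from `|α| + |β| > |α₀ + β₀|` because `r > 1`, those with `α + β = α₀ + β₀`
because the lexicographic order is compatible with addition, and all others vanish. So that
coefficient alone already has size `‖u‖_r ‖v‖_r`.
-/

open scoped NNReal

/-- The PBW-norm `‖Σ_α d_α X^α‖_r = sup_α ‖d_α‖ r^{|α|}` on the universal enveloping
algebra, expressed via a PBW basis `b` indexed by multi-indices `α : Fin d →₀ ℕ`. -/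
noncomputable def pbwNorm {L : Type*} [NontriviallyNormedField L] {𝔤 : Type*}
    [LieRing 𝔤] [LieAlgebra L 𝔤] {d : ℕ}
    (b : Module.Basis (Fin d →₀ ℕ) L (UniversalEnvelopingAlgebra L 𝔤)) (r : ℝ≥0)
    (u : UniversalEnvelopingAlgebra L 𝔤) : ℝ≥0 :=
  (b.repr u).support.sup fun α => ‖b.repr u α‖₊ * r ^ (α.sum fun _ n => n)

open Finsupp (single)

theorem List.prod_map_pow_add {ι M : Type*} [LinearOrder ι] [Monoid M] (x : ι → M)
    (m n : ι → ℕ) {l : List ι} (hl : l.Pairwise (· < ·))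
    (h : ∀ i ∈ l, ∀ j ∈ l, m i ≠ 0 → n j ≠ 0 → i ≤ j) :
    (l.map fun k => x k ^ (m k + n k)).prod =
      (l.map fun k => x k ^ m k).prod * (l.map fun k => x k ^ n k).prod := by
  induction l with
  | nil => simp
  | cons k l ih =>
    obtain ⟨hk, hl⟩ := List.pairwise_cons.mp hl
    rw [List.map_cons, List.map_cons, List.map_cons, List.prod_cons, List.prod_cons,
      List.prod_cons, ih hl fun i hi j hj => h i (.tail k hi) j (.tail k hj)]
    by_cases hnk : n k = 0
    · simp only [hnk, add_zero, pow_zero, one_mul, mul_assoc]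
    · have hm : (l.map fun k => x k ^ m k).prod = 1 := by
        refine List.prod_eq_one fun y hy => ?_
        obtain ⟨j, hj, rfl⟩ := List.mem_map.mp hy
        have hmj : m j = 0 := by
          by_contra hmj
          exact (hk j hj).not_ge (h j (.tail k hj) k List.mem_cons_self hmj hnk)
        rw [hmj, pow_zero]
      rw [hm, pow_add]
      group

theorem Finsupp.exists_eq_single_one_add_of_mem_support {σ : Type*} [LinearOrder σ]
    {f : σ →₀ ℕ} {k : σ} (hk : k ∈ f.support) :
    ∃ j ≤ k, ∃ f₀, f = single j 1 + f₀ ∧ ∀ l ∈ f₀.support, j ≤ l := by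
  set j := f.support.min' ⟨k, hk⟩
  refine ⟨j, f.support.min'_le k hk, f - single j 1, ?_,
    fun l hl => f.support.min'_le l (support_tsub hl)⟩
  rw [add_comm]
  exact (sub_add_single_one_cancel (mem_support_iff.mp (f.support.min'_mem _))).symm

theorem Finsupp.exists_eq_add_single_one_of_ne_zero {σ : Type*} [LinearOrder σ]
    {f : σ →₀ ℕ} (hf : f ≠ 0) : ∃ i f₀, f = f₀ + single i 1 ∧ ∀ l ∈ f₀.support, l ≤ i := by
  set i := f.support.max' (support_nonempty_iff.mpr hf)
  refine ⟨i, f - single i 1, ?_, fun l hl => f.support.le_max' l (support_tsub hl)⟩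
  exact (sub_add_single_one_cancel (mem_support_iff.mp (f.support.max'_mem _))).symm

section IntegralDegreeLT

variable {L M σ : Type*} [NormedField L] [IsUltrametricDist L] [AddCommGroup M] [Module L M]
  (b : Module.Basis (σ →₀ ℕ) L M)

/-- The span over the unit ball of `L` of the `b γ` with `γ.degree < n`, given by coordinates. -/
def integralDegreeLT (n : ℕ) : AddSubgroup M where
  carrier := {u | ∀ γ, ‖b.repr u γ‖ ≤ 1 ∧ (b.repr u γ ≠ 0 → γ.degree < n)}
  zero_mem' γ := by simp
  add_mem' {u v} hu hv γ := by
    simp only [map_add, Finsupp.add_apply]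
    refine ⟨(IsUltrametricDist.norm_add_le_max _ _).trans (max_le (hu γ).1 (hv γ).1),
      fun h => ?_⟩
    by_cases hγ : b.repr u γ = 0
    · exact (hv γ).2 (by simpa [hγ] using h)
    · exact (hu γ).2 hγ
  neg_mem' {u} hu γ := by simpa using hu γ

variable {b}

theorem repr_eq_zero_of_mem_integralDegreeLT {n : ℕ} {u : M}
    (hu : u ∈ integralDegreeLT b n) {γ : σ →₀ ℕ} (hγ : n ≤ γ.degree) : b.repr u γ = 0 := by
  by_contra h
  exact ((hu γ).2 h).not_ge hγ

theorem integralDegreeLT_mono {n m : ℕ} (h : n ≤ m) :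
    integralDegreeLT b n ≤ integralDegreeLT b m :=
  fun _ hu γ => ⟨(hu γ).1, fun h0 => ((hu γ).2 h0).trans_le h⟩

theorem smul_mem_integralDegreeLT {n : ℕ} {c : L} (hc : ‖c‖ ≤ 1) {u : M}
    (hu : u ∈ integralDegreeLT b n) : c • u ∈ integralDegreeLT b n := fun γ => by
  simp only [map_smul, Finsupp.smul_apply, smul_eq_mul, norm_mul, ne_eq, mul_eq_zero, not_or]
  exact ⟨mul_le_one₀ hc (norm_nonneg _) (hu γ).1, fun h => (hu γ).2 h.2⟩

theorem basis_mem_integralDegreeLT {n : ℕ} {γ : σ →₀ ℕ} (hγ : γ.degree < n) :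
    b γ ∈ integralDegreeLT b n := fun γ' => by
  classical
  rw [b.repr_self, Finsupp.single_apply]
  split_ifs with h
  · exact ⟨norm_one.le, fun _ => h ▸ hγ⟩
  · simp

theorem repr_eq_of_sub_basis_mem_integralDegreeLT {n : ℕ} {u : M} {γ₀ : σ →₀ ℕ}
    (hu : u - b γ₀ ∈ integralDegreeLT b n) {γ : σ →₀ ℕ} (hγ : n ≤ γ.degree) :
    b.repr u γ = single γ₀ 1 γ := by
  rw [← sub_add_cancel u (b γ₀), map_add, Finsupp.add_apply, b.repr_self,
    repr_eq_zero_of_mem_integralDegreeLT hu hγ, zero_add]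

theorem nnnorm_repr_le_one_of_sub_basis_mem_integralDegreeLT {n : ℕ} {u : M} {γ₀ : σ →₀ ℕ}
    (hu : u - b γ₀ ∈ integralDegreeLT b n) (γ : σ →₀ ℕ) : ‖b.repr u γ‖₊ ≤ 1 := by
  classical
  rw [← NNReal.coe_le_coe, coe_nnnorm, NNReal.coe_one, ← sub_add_cancel u (b γ₀), map_add,
    Finsupp.add_apply, b.repr_self]
  refine (IsUltrametricDist.norm_add_le_max _ _).trans (max_le (hu γ).1 ?_)
  rw [Finsupp.single_apply]
  split_ifs <;> simp

end IntegralDegreeLT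

section Algebra

variable {L A σ : Type*} [NormedField L] [IsUltrametricDist L] [Ring A] [Algebra L A]
  {b : Module.Basis (σ →₀ ℕ) L A}

variable (b) in
def HasIntegralStraightening : Prop :=
  ∀ α β, b α * b β - b (α + β) ∈ integralDegreeLT b (α.degree + β.degree)

theorem mul_mem_integralDegreeLT {x : A} {δ : σ →₀ ℕ} {m : ℕ}
    (hx : ∀ γ, γ.degree < m → x * b γ - b (δ + γ) ∈ integralDegreeLT b (δ.degree + γ.degree))
    {u : A} (hu : u ∈ integralDegreeLT b m) : x * u ∈ integralDegreeLT b (δ.degree + m) := by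
  rw [← b.linearCombination_repr u, Finsupp.linearCombination_apply, Finsupp.mul_sum]
  refine AddSubgroup.sum_mem _ fun γ hγ => ?_
  have hdeg := (hu γ).2 (Finsupp.mem_support_iff.mp hγ)
  have hlead : b (δ + γ) ∈ integralDegreeLT b (δ.degree + m) :=
    basis_mem_integralDegreeLT (by rw [map_add]; omega)
  dsimp only
  rw [mul_smul_comm]
  refine smul_mem_integralDegreeLT (hu γ).1 ?_
  simpa using add_mem (integralDegreeLT_mono (by omega) (hx γ hdeg)) hlead

end Algebra

section Monomials

open UniversalEnvelopingAlgebra (ι)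

variable {R : Type*} [CommRing R] {𝔤 : Type*} [LieRing 𝔤] [LieAlgebra R 𝔤] {d : ℕ}
  {bg : Module.Basis (Fin d) R 𝔤}
  {b : Module.Basis (Fin d →₀ ℕ) R (UniversalEnvelopingAlgebra R 𝔤)}

local notation "𝒰" => UniversalEnvelopingAlgebra R 𝔤

variable (bg b) in
def IsPBWBasis : Prop :=
  ∀ α : Fin d →₀ ℕ, b α = ((List.finRange d).map fun i => (ι R (bg i) : 𝒰) ^ α i).prod

theorem basis_mul_basis_of_le (hb : IsPBWBasis bg b)
    {α β : Fin d →₀ ℕ} (h : ∀ i ∈ α.support, ∀ j ∈ β.support, i ≤ j) :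
    b α * b β = b (α + β) := by
  simp only [hb α, hb β, hb (α + β), Finsupp.coe_add, Pi.add_apply]
  refine (List.prod_map_pow_add _ _ _ (List.pairwise_lt_finRange d) fun i _ j _ hi hj => ?_).symm
  exact h i (Finsupp.mem_support_iff.mpr hi) j (Finsupp.mem_support_iff.mpr hj)

theorem ι_eq_basis_single (hb : IsPBWBasis bg b) (i : Fin d) : ι R (bg i) = b (single i 1) := by
  classical
  rw [hb, List.prod_map_eq_pow_single i _ fun j hj _ => by simp [Ne.symm hj],
    List.count_eq_one_of_mem (List.nodup_finRange d) (List.mem_finRange i)]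
  simp

theorem ι_mul_basis_of_le (hb : IsPBWBasis bg b)
    {i : Fin d} {β : Fin d →₀ ℕ} (h : ∀ j ∈ β.support, i ≤ j) :
    ι R (bg i) * b β = b (single i 1 + β) := by
  classical
  rw [ι_eq_basis_single hb, basis_mul_basis_of_le hb]
  intro k hk j hj
  rw [Finsupp.support_single _ one_ne_zero, Finset.mem_singleton] at hk
  exact hk ▸ h j hj

theorem basis_mul_ι_of_le (hb : IsPBWBasis bg b)
    {i : Fin d} {α : Fin d →₀ ℕ} (h : ∀ j ∈ α.support, j ≤ i) :
    b α * ι R (bg i) = b (α + single i 1) := by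
  classical
  rw [ι_eq_basis_single hb, basis_mul_basis_of_le hb]
  intro j hj k hk
  rw [Finsupp.support_single _ one_ne_zero, Finset.mem_singleton] at hk
  exact hk ▸ h j hj

attribute [local instance] LieRing.ofAssociativeRing in
theorem ι_mul_ι (x y : 𝔤) : (ι R x * ι R y : 𝒰) = ι R y * ι R x + ι R ⁅x, y⁆ := by
  rw [LieHom.map_lie, Ring.lie_def, add_sub_cancel]

end Monomials

section Straightening

open UniversalEnvelopingAlgebra (ι)

variable {L : Type*} [NormedField L] [IsUltrametricDist L] {𝔤 : Type*} [LieRing 𝔤]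
  [LieAlgebra L 𝔤] {d : ℕ} {bg : Module.Basis (Fin d) L 𝔤}
  {b : Module.Basis (Fin d →₀ ℕ) L (UniversalEnvelopingAlgebra L 𝔤)}

local notation "𝒰" => UniversalEnvelopingAlgebra L 𝔤

theorem ι_mul_mem_integralDegreeLT {y : 𝔤} (hy : ∀ k, ‖bg.repr y k‖ ≤ 1) {n : ℕ} {u : 𝒰}
    (hu : ∀ k, ι L (bg k) * u ∈ integralDegreeLT b n) : ι L y * u ∈ integralDegreeLT b n := by
  rw [← bg.linearCombination_repr y, Finsupp.linearCombination_apply, map_finsuppSum,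
    Finsupp.sum_mul]
  refine AddSubgroup.sum_mem _ fun k _ => ?_
  dsimp only
  rw [map_smul, smul_mul_assoc]
  exact smul_mem_integralDegreeLT (hy k) (hu k)

theorem ι_mul_basis_sub_mem_integralDegreeLT (hb : IsPBWBasis bg b)
    (hint : ∀ i j k, ‖bg.repr ⁅bg i, bg j⁆ k‖ ≤ 1) (β : Fin d →₀ ℕ) (i : Fin d) :
    ι L (bg i) * b β - b (β + single i 1) ∈ integralDegreeLT b (β.degree + 1) := by
  induction hn : β.degree using Nat.strong_induction_on generalizing β i with
  | _ n ih =>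
  have hgen : ∀ k, ∀ u ∈ integralDegreeLT b n, ι L (bg k) * u ∈ integralDegreeLT b (n + 1) := by
    intro k u hu
    simpa [add_comm] using mul_mem_integralDegreeLT (δ := single k 1)
      (fun γ hγ => by simpa [add_comm] using ih _ hγ γ k rfl) hu
  by_cases hlow : ∀ j ∈ β.support, i ≤ j
  · rw [ι_mul_basis_of_le hb hlow, add_comm (single i 1), sub_self]
    exact zero_mem _
  push Not at hlow
  obtain ⟨k, hk, hki⟩ := hlow
  obtain ⟨j, hjk, β₀, rfl, hβ₀⟩ := Finsupp.exists_eq_single_one_add_of_mem_support hk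
  have hdeg : β₀.degree + 1 = n := by rw [← hn, map_add, Finsupp.degree_single, add_comm]
  have hsplit : ι L (bg i) * b (single j 1 + β₀) =
      ι L (bg j) * (ι L (bg i) * b β₀) + ι L ⁅bg i, bg j⁆ * b β₀ := by
    rw [← ι_mul_basis_of_le hb hβ₀, ← mul_assoc, ← mul_assoc, ι_mul_ι, add_mul]
  have hlead : ι L (bg j) * b (β₀ + single i 1) = b (single j 1 + β₀ + single i 1) := by
    rw [ι_mul_basis_of_le hb, ← add_assoc]
    intro l hl
    rcases Finset.mem_union.mp (Finsupp.support_add hl) with hl | hl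
    · exact hβ₀ l hl
    · rw [Finset.mem_singleton.mp (Finsupp.support_single_subset hl)]
      exact (hjk.trans_lt hki).le
  have hbracket : ι L ⁅bg i, bg j⁆ * b β₀ ∈ integralDegreeLT b (n + 1) :=
    ι_mul_mem_integralDegreeLT (hint i j) fun k =>
      hgen k _ (basis_mem_integralDegreeLT (by omega))
  rw [hsplit, ← hlead, add_sub_right_comm, ← mul_sub]
  exact add_mem (hgen j _ (hdeg ▸ ih _ (by omega) β₀ i rfl)) hbracket

theorem hasIntegralStraightening (hb : IsPBWBasis bg b)
    (hint : ∀ i j k, ‖bg.repr ⁅bg i, bg j⁆ k‖ ≤ 1) : HasIntegralStraightening b := by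
  intro α β
  induction hn : α.degree using Nat.strong_induction_on generalizing α β with
  | _ n ih =>
  rcases eq_or_ne α 0 with rfl | hα
  · rw [basis_mul_basis_of_le hb (by simp), sub_self]
    exact zero_mem _
  obtain ⟨i, α₀, rfl, hα₀⟩ := Finsupp.exists_eq_add_single_one_of_ne_zero hα
  have hdeg : α₀.degree + 1 = n := by rw [← hn, map_add, Finsupp.degree_single]
  have hsplit : b (α₀ + single i 1) * b β = b α₀ * b (β + single i 1) +
      b α₀ * (ι L (bg i) * b β - b (β + single i 1)) := by
    rw [← basis_mul_ι_of_le hb hα₀, mul_assoc, mul_sub]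
    abel
  have hlead : b α₀ * b (β + single i 1) - b (α₀ + single i 1 + β) ∈
      integralDegreeLT b (n + β.degree) := by
    have h := ih _ (by omega) α₀ (β + single i 1) rfl
    rw [show α₀ + (β + single i 1) = α₀ + single i 1 + β by abel] at h
    refine integralDegreeLT_mono ?_ h
    rw [map_add, Finsupp.degree_single]
    omega
  have hcorr : b α₀ * (ι L (bg i) * b β - b (β + single i 1)) ∈
      integralDegreeLT b (n + β.degree) :=
    integralDegreeLT_mono (by omega) (mul_mem_integralDegreeLT (δ := α₀)
      (fun γ _ => ih _ (by omega) α₀ γ rfl) (ι_mul_basis_sub_mem_integralDegreeLT hb hint β i))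
  rw [hsplit, add_sub_right_comm]
  exact add_mem hlead hcorr

end Straightening

theorem Module.Basis.repr_mul_apply {R A ι : Type*} [CommSemiring R] [Semiring A] [Algebra R A]
    (b : Module.Basis ι R A) (u v : A) (γ : ι) :
    b.repr (u * v) γ = ∑ p ∈ (b.repr u).support ×ˢ (b.repr v).support,
      b.repr u p.1 * b.repr v p.2 * b.repr (b p.1 * b p.2) γ := by
  have := LinearMap.sum_repr_mul_repr_mul b b (B := LinearMap.mul R A) u v
  rw [LinearMap.mul_apply'] at this
  rw [← this]
  simp [Finsupp.sum, Finset.sum_product, map_sum, Finset.sum_apply', mul_assoc]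

theorem IsUltrametricDist.nnnorm_sum_eq_of_forall_lt {ι M : Type*} [SeminormedAddCommGroup M]
    [IsUltrametricDist M] [DecidableEq ι] {s : Finset ι} {f : ι → M} {i₀ : ι} (hi₀ : i₀ ∈ s)
    (h : ∀ i ∈ s.erase i₀, ‖f i‖₊ < ‖f i₀‖₊) : ‖∑ i ∈ s, f i‖₊ = ‖f i₀‖₊ := by
  rw [← Finset.add_sum_erase s f hi₀]
  rcases (s.erase i₀).eq_empty_or_nonempty with he | ⟨i, hi⟩
  · rw [he, Finset.sum_empty, add_zero]
  have htail : ‖∑ i ∈ s.erase i₀, f i‖₊ < ‖f i₀‖₊ :=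
    (Finset.nnnorm_sum_le_sup_nnnorm _ _).trans_lt
      ((Finset.sup_lt_iff (zero_le.trans_lt (h i hi))).mpr h)
  rw [nnnorm_add_eq_max_of_nnnorm_ne_nnnorm htail.ne', max_eq_left htail.le]

section PbwNorm

variable {L : Type*} [NontriviallyNormedField L] {𝔤 : Type*} [LieRing 𝔤] [LieAlgebra L 𝔤]
  {d : ℕ} {b : Module.Basis (Fin d →₀ ℕ) L (UniversalEnvelopingAlgebra L 𝔤)} {r : ℝ≥0}

local notation "𝒰" => UniversalEnvelopingAlgebra L 𝔤

theorem nnnorm_repr_mul_pow_le_pbwNorm (u : 𝒰) (γ : Fin d →₀ ℕ) :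
    ‖b.repr u γ‖₊ * r ^ γ.degree ≤ pbwNorm b r u := by
  by_cases h : γ ∈ (b.repr u).support
  · exact Finset.le_sup (f := fun α => ‖b.repr u α‖₊ * r ^ α.degree) h
  · simp [Finsupp.notMem_support_iff.mp h]

theorem pbwNorm_zero : pbwNorm b r (0 : 𝒰) = 0 := by
  simp [pbwNorm]

theorem pbwNorm_eq_zero_iff (hr : r ≠ 0) {u : 𝒰} : pbwNorm b r u = 0 ↔ u = 0 := by
  refine ⟨fun h => b.repr.map_eq_zero_iff.mp (Finsupp.ext fun γ => ?_), ?_⟩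
  · have := nnnorm_repr_mul_pow_le_pbwNorm (b := b) (r := r) u γ
    simpa [h, hr] using this
  · rintro rfl
    exact pbwNorm_zero

structure IsLeadingIndex (b : Module.Basis (Fin d →₀ ℕ) L 𝒰) (r : ℝ≥0) (u : 𝒰)
    (α₀ : Fin d →₀ ℕ) : Prop where
  repr_ne_zero : b.repr u α₀ ≠ 0
  attains : ‖b.repr u α₀‖₊ * r ^ α₀.degree = pbwNorm b r u
  lex_max : ∀ α, ‖b.repr u α‖₊ * r ^ α.degree = pbwNorm b r u → toLex α ≤ toLex α₀

theorem IsLeadingIndex.pbwNorm_pos (hr : r ≠ 0) {u : 𝒰} {α₀ : Fin d →₀ ℕ}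
    (h : IsLeadingIndex b r u α₀) : 0 < pbwNorm b r u :=
  h.attains ▸ mul_pos (nnnorm_pos.mpr h.repr_ne_zero) (pow_pos (pos_iff_ne_zero.mpr hr) _)

theorem exists_isLeadingIndex (hr : r ≠ 0) {u : 𝒰} (hu : u ≠ 0) :
    ∃ α₀, IsLeadingIndex b r u α₀ := by
  classical
  have hne : (b.repr u).support.Nonempty :=
    Finsupp.support_nonempty_iff.mpr (b.repr.map_ne_zero_iff.mpr hu)
  obtain ⟨α₁, hα₁, hsup⟩ :=
    Finset.exists_mem_eq_sup _ hne fun α => ‖b.repr u α‖₊ * r ^ α.degree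
  obtain ⟨α₀, hα₀, hmax⟩ := Finset.exists_max_image
    ((b.repr u).support.filter fun α => ‖b.repr u α‖₊ * r ^ α.degree = pbwNorm b r u) toLex
    ⟨α₁, Finset.mem_filter.mpr ⟨hα₁, hsup.symm⟩⟩
  obtain ⟨hα₀supp, hα₀attains⟩ := Finset.mem_filter.mp hα₀
  refine ⟨α₀, Finsupp.mem_support_iff.mp hα₀supp, hα₀attains,
    fun α hα => hmax α (Finset.mem_filter.mpr ⟨Finsupp.mem_support_iff.mpr fun h0 => ?_, hα⟩)⟩
  rw [h0, nnnorm_zero, zero_mul, eq_comm, pbwNorm_eq_zero_iff hr] at hα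
  exact hu hα

theorem IsLeadingIndex.mul_lt_pbwNorm_mul (hr : r ≠ 0) {u v : 𝒰} {α₀ β₀ : Fin d →₀ ℕ}
    (hu : IsLeadingIndex b r u α₀) (hv : IsLeadingIndex b r v β₀) {α β : Fin d →₀ ℕ}
    (hsum : α + β = α₀ + β₀) (hne : (α, β) ≠ (α₀, β₀)) :
    (‖b.repr u α‖₊ * r ^ α.degree) * (‖b.repr v β‖₊ * r ^ β.degree) <
      pbwNorm b r u * pbwNorm b r v := by
  have hα := nnnorm_repr_mul_pow_le_pbwNorm (b := b) (r := r) u α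
  have hβ := nnnorm_repr_mul_pow_le_pbwNorm (b := b) (r := r) v β
  refine lt_of_le_of_ne (mul_le_mul' hα hβ) fun heq => hne ?_
  have hαpos : 0 < ‖b.repr u α‖₊ * r ^ α.degree :=
    pos_of_mul_pos_left (heq ▸ mul_pos (hu.pbwNorm_pos hr) (hv.pbwNorm_pos hr)) zero_le
  obtain ⟨hαeq, hβeq⟩ := (mul_eq_mul_iff_eq_and_eq_of_pos hα hβ hαpos (hv.pbwNorm_pos hr)).mp heq
  obtain ⟨hα₀, hβ₀⟩ := (add_eq_add_iff_eq_and_eq (hu.lex_max α hαeq) (hv.lex_max β hβeq)).mp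
    (congrArg toLex hsum)
  rw [toLex_inj.mp hα₀, toLex_inj.mp hβ₀]

variable [IsUltrametricDist L]

theorem nnnorm_repr_basis_mul_basis_mul_pow_le (hmul : HasIntegralStraightening b) (hr : 1 ≤ r)
    (α β γ : Fin d →₀ ℕ) :
    ‖b.repr (b α * b β) γ‖₊ * r ^ γ.degree ≤ r ^ (α.degree + β.degree) := by
  by_cases hγ : γ.degree ≤ α.degree + β.degree
  · exact mul_le_of_le_one_of_le
      (nnnorm_repr_le_one_of_sub_basis_mem_integralDegreeLT (hmul α β) γ)
      (pow_le_pow_right₀ hr hγ)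
  · have hne : α + β ≠ γ := by
      rintro rfl
      exact hγ (map_add _ α β).le
    rw [repr_eq_of_sub_basis_mem_integralDegreeLT (hmul α β) (not_le.mp hγ).le,
      Finsupp.single_eq_of_ne' hne, nnnorm_zero, zero_mul]
    exact zero_le

theorem pbwNorm_mul_le (hmul : HasIntegralStraightening b) (hr : 1 ≤ r) (u v : 𝒰) :
    pbwNorm b r (u * v) ≤ pbwNorm b r u * pbwNorm b r v := by
  refine Finset.sup_le fun γ _ => ?_
  have hrγ : 0 < r ^ γ.degree := pow_pos (zero_lt_one.trans_le hr) _
  change ‖b.repr (u * v) γ‖₊ * r ^ γ.degree ≤ _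
  rw [← le_div_iff₀ hrγ, b.repr_mul_apply]
  refine IsUltrametricDist.nnnorm_sum_le_of_forall_le fun ⟨α, β⟩ _ => (le_div_iff₀ hrγ).mpr ?_
  calc ‖b.repr u α * b.repr v β * b.repr (b α * b β) γ‖₊ * r ^ γ.degree
      = ‖b.repr u α‖₊ * ‖b.repr v β‖₊ * (‖b.repr (b α * b β) γ‖₊ * r ^ γ.degree) := by
        rw [nnnorm_mul, nnnorm_mul, mul_assoc]
    _ ≤ ‖b.repr u α‖₊ * ‖b.repr v β‖₊ * r ^ (α.degree + β.degree) :=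
        mul_le_mul_right (nnnorm_repr_basis_mul_basis_mul_pow_le hmul hr α β γ) _
    _ = (‖b.repr u α‖₊ * r ^ α.degree) * (‖b.repr v β‖₊ * r ^ β.degree) := by
        rw [pow_add]
        ring
    _ ≤ pbwNorm b r u * pbwNorm b r v :=
        mul_le_mul' (nnnorm_repr_mul_pow_le_pbwNorm u α) (nnnorm_repr_mul_pow_le_pbwNorm v β)

theorem IsLeadingIndex.nnnorm_term_mul_pow_lt
    (hmul : HasIntegralStraightening b) (hr : 1 < r) {u v : 𝒰} {α₀ β₀ : Fin d →₀ ℕ}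
    (hu : IsLeadingIndex b r u α₀) (hv : IsLeadingIndex b r v β₀) {α β : Fin d →₀ ℕ}
    (hne : (α, β) ≠ (α₀, β₀)) :
    ‖b.repr u α * b.repr v β * b.repr (b α * b β) (α₀ + β₀)‖₊ * r ^ (α₀ + β₀).degree <
      pbwNorm b r u * pbwNorm b r v := by
  have hr0 : r ≠ 0 := (zero_lt_one.trans hr).ne'
  have hpos := mul_pos (hu.pbwNorm_pos hr0) (hv.pbwNorm_pos hr0)
  rcases eq_or_ne (b.repr u α * b.repr v β) 0 with h0 | h0
  · rwa [h0, zero_mul, nnnorm_zero, zero_mul]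
  by_cases hdeg : α.degree + β.degree ≤ (α₀ + β₀).degree
  · rw [repr_eq_of_sub_basis_mem_integralDegreeLT (hmul α β) hdeg, Finsupp.single_apply]
    split_ifs with hsum
    · calc ‖b.repr u α * b.repr v β * 1‖₊ * r ^ (α₀ + β₀).degree
          = (‖b.repr u α‖₊ * r ^ α.degree) * (‖b.repr v β‖₊ * r ^ β.degree) := by
            rw [← hsum, map_add, pow_add, mul_one, nnnorm_mul]
            ring
        _ < pbwNorm b r u * pbwNorm b r v := hu.mul_lt_pbwNorm_mul hr0 hv hsum hne
    · rwa [mul_zero, nnnorm_zero, zero_mul]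
  · calc ‖b.repr u α * b.repr v β * b.repr (b α * b β) (α₀ + β₀)‖₊ * r ^ (α₀ + β₀).degree
        ≤ ‖b.repr u α * b.repr v β‖₊ * r ^ (α₀ + β₀).degree := by
          rw [nnnorm_mul (_ * _)]
          gcongr
          exact mul_le_of_le_one_right'
            (nnnorm_repr_le_one_of_sub_basis_mem_integralDegreeLT (hmul α β) _)
      _ < ‖b.repr u α * b.repr v β‖₊ * r ^ (α.degree + β.degree) :=
          mul_lt_mul_of_pos_left (pow_lt_pow_right₀ hr (not_le.mp hdeg)) (nnnorm_pos.mpr h0)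
      _ = (‖b.repr u α‖₊ * r ^ α.degree) * (‖b.repr v β‖₊ * r ^ β.degree) := by
          rw [pow_add, nnnorm_mul]
          ring
      _ ≤ pbwNorm b r u * pbwNorm b r v :=
          mul_le_mul' (nnnorm_repr_mul_pow_le_pbwNorm u α) (nnnorm_repr_mul_pow_le_pbwNorm v β)

theorem le_pbwNorm_mul (hmul : HasIntegralStraightening b) (hr : 1 < r) (u v : 𝒰) :
    pbwNorm b r u * pbwNorm b r v ≤ pbwNorm b r (u * v) := by
  classical
  have hr0 : r ≠ 0 := (zero_lt_one.trans hr).ne'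
  rcases eq_or_ne u 0 with rfl | hu0
  · rw [pbwNorm_zero, zero_mul]
    exact zero_le
  rcases eq_or_ne v 0 with rfl | hv0
  · rw [pbwNorm_zero, mul_zero]
    exact zero_le
  obtain ⟨α₀, hu⟩ := exists_isLeadingIndex hr0 hu0
  obtain ⟨β₀, hv⟩ := exists_isLeadingIndex hr0 hv0
  have hnorms : pbwNorm b r u * pbwNorm b r v =
      ‖b.repr u α₀ * b.repr v β₀‖₊ * r ^ (α₀ + β₀).degree := by
    rw [← hu.attains, ← hv.attains, nnnorm_mul, map_add, pow_add]
    ring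
  have hlead : b.repr (b α₀ * b β₀) (α₀ + β₀) = 1 := by
    rw [repr_eq_of_sub_basis_mem_integralDegreeLT (hmul α₀ β₀) (map_add _ α₀ β₀).ge,
      Finsupp.single_eq_same]
  have hcoeff : ‖b.repr (u * v) (α₀ + β₀)‖₊ = ‖b.repr u α₀ * b.repr v β₀‖₊ := by
    rw [b.repr_mul_apply, IsUltrametricDist.nnnorm_sum_eq_of_forall_lt (i₀ := (α₀, β₀))
      (Finset.mem_product.mpr ⟨Finsupp.mem_support_iff.mpr hu.repr_ne_zero,
        Finsupp.mem_support_iff.mpr hv.repr_ne_zero⟩), hlead, mul_one]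
    intro p hp
    rw [hlead, mul_one]
    refine lt_of_mul_lt_mul_right ?_ (zero_le : 0 ≤ r ^ (α₀ + β₀).degree)
    rw [← hnorms]
    exact hu.nnnorm_term_mul_pow_lt hmul hr hv (Finset.ne_of_mem_erase hp)
  calc pbwNorm b r u * pbwNorm b r v = ‖b.repr (u * v) (α₀ + β₀)‖₊ * r ^ (α₀ + β₀).degree := by
        rw [hcoeff, hnorms]
    _ ≤ pbwNorm b r (u * v) := nnnorm_repr_mul_pow_le_pbwNorm _ _

theorem pbwNorm_mul_eq (hmul : HasIntegralStraightening b) (hr : 1 < r) (u v : 𝒰) :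
    pbwNorm b r (u * v) = pbwNorm b r u * pbwNorm b r v :=
  (pbwNorm_mul_le hmul hr.le u v).antisymm (le_pbwNorm_mul hmul hr u v)

end PbwNorm

theorem pbwNorm_mul_general
    (L : Type*) [NontriviallyNormedField L] [IsUltrametricDist L]
    (𝔤 : Type*) [LieRing 𝔤] [LieAlgebra L 𝔤] {d : ℕ}
    (bg : Module.Basis (Fin d) L 𝔤)
    (hint : ∀ i j k, ‖bg.repr ⁅bg i, bg j⁆ k‖ ≤ 1)
    (b : Module.Basis (Fin d →₀ ℕ) L (UniversalEnvelopingAlgebra L 𝔤))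
    (hb : ∀ α : Fin d →₀ ℕ,
      b α = ((List.finRange d).map fun i =>
        (UniversalEnvelopingAlgebra.ι L (bg i) : UniversalEnvelopingAlgebra L 𝔤) ^ α i).prod)
    (r : ℝ≥0) (hr : 1 < r) :
    (∀ u v : UniversalEnvelopingAlgebra L 𝔤,
        pbwNorm b r (u * v) = pbwNorm b r u * pbwNorm b r v) ∧
    (∀ u v : UniversalEnvelopingAlgebra L 𝔤, u * v = 0 → u = 0 ∨ v = 0) := by
  have hmul := hasIntegralStraightening hb hint
  have hr0 : r ≠ 0 := (zero_lt_one.trans hr).ne'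
  refine ⟨pbwNorm_mul_eq hmul hr, fun u v huv => ?_⟩
  have h := pbwNorm_mul_eq hmul hr u v
  rwa [huv, pbwNorm_zero, eq_comm, mul_eq_zero, pbwNorm_eq_zero_iff hr0,
    pbwNorm_eq_zero_iff hr0] at h

/-- with a basis of `𝔤` having integral structure constants and `r > 1`, the
PBW norm `‖·‖_r` on `U(𝔤)` is multiplicative; in particular `U(𝔤)` has no zero divisors. -/
theorem pbwNorm_mul {p : ℕ} [Fact (Nat.Prime p)]
    (L : Type*) [NontriviallyNormedField L] [NormedAlgebra ℚ_[p] L]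
    [FiniteDimensional ℚ_[p] L] [IsUltrametricDist L]
    (𝔤 : Type*) [LieRing 𝔤] [LieAlgebra L 𝔤] {d : ℕ}
    (bg : Module.Basis (Fin d) L 𝔤)
    (hint : ∀ i j k, ‖bg.repr ⁅bg i, bg j⁆ k‖ ≤ 1)
    (b : Module.Basis (Fin d →₀ ℕ) L (UniversalEnvelopingAlgebra L 𝔤))
    (hb : ∀ α : Fin d →₀ ℕ,
      b α = ((List.finRange d).map fun i =>
        (UniversalEnvelopingAlgebra.ι L (bg i) : UniversalEnvelopingAlgebra L 𝔤) ^ α i).prod)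
    (r : ℝ≥0) (hr : 1 < r) :
    (∀ u v : UniversalEnvelopingAlgebra L 𝔤,
        pbwNorm b r (u * v) = pbwNorm b r u * pbwNorm b r v) ∧
    (∀ u v : UniversalEnvelopingAlgebra L 𝔤, u * v = 0 → u = 0 ∨ v = 0) :=
  pbwNorm_mul_general L 𝔤 bg hint b hb r hr
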